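/- Let X̃ ∈ R^{n×m} have thin SVD X̃ = UΣV^T with U ∈ St(m,n), V ∈ O(m), and Σ diagonal with nonnegative entries. Then for every X ∈ St(m,n), ||X - X̃||_F ≥ ||UV^T - X̃||_F; i.e., UV^T minimizes the Frobenius distance from X̃ to the Stiefel manifold. -/
import Mathlib


open Matrix

/-- Let `X̃ ∈ ℝ^{n×m}` have thin SVD `X̃ = UΣVᵀ` with `U ∈ St(m,n)`, `V ∈ O(m)`, and `Σ`
diagonal with nonnegative entries.  Then for every `X ∈ St(m,n)`,
`‖X - X̃‖_F ≥ ‖UVᵀ - X̃‖_F`, i.e. `UVᵀ` minimizes the Frobenius distance from `X̃` to the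
Stiefel manifold (stated via `‖M‖_F² = Trace(MᵀM)`). -/
theorem UVt_minimizes_frobenius_distance_to_stiefel
    {n m : ℕ} (Xt U : Matrix (Fin n) (Fin m) ℝ) (V : Matrix (Fin m) (Fin m) ℝ)
    (σ : Fin m → ℝ)
    (hU : Uᴴ * U = 1) (hV : Vᴴ * V = 1) (hV' : V * Vᴴ = 1)
    (hσ : ∀ i, 0 ≤ σ i)
    (hSVD : Xt = U * Matrix.diagonal σ * Vᴴ) :
    ∀ X : Matrix (Fin n) (Fin m) ℝ, Xᴴ * X = 1 →
      Real.sqrt (Matrix.trace ((U * Vᴴ - Xt)ᴴ * (U * Vᴴ - Xt))) ≤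
        Real.sqrt (Matrix.trace ((X - Xt)ᴴ * (X - Xt))) := by
  intro X hX
  apply Real.sqrt_le_sqrt
  -- Expansion lemma: for any Y with YᴴY = 1,
  -- trace((Y-Xt)ᴴ(Y-Xt)) = m - 2 trace(Yᴴ Xt) + trace(Xtᴴ Xt)
  have expand : ∀ Y : Matrix (Fin n) (Fin m) ℝ, Yᴴ * Y = 1 →
      Matrix.trace ((Y - Xt)ᴴ * (Y - Xt)) =
        (m : ℝ) - 2 * Matrix.trace (Yᴴ * Xt) + Matrix.trace (Xtᴴ * Xt) := by
    intro Y hY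
    have h1 : (Y - Xt)ᴴ * (Y - Xt) = Yᴴ * Y - Yᴴ * Xt - Xtᴴ * Y + Xtᴴ * Xt := by
      rw [conjTranspose_sub, Matrix.sub_mul, Matrix.mul_sub, Matrix.mul_sub]
      abel
    have h2 : Matrix.trace (Xtᴴ * Y) = Matrix.trace (Yᴴ * Xt) := by
      have : (Yᴴ * Xt)ᴴ = Xtᴴ * Y := by simp [Matrix.mul_assoc]
      calc Matrix.trace (Xtᴴ * Y) = Matrix.trace ((Yᴴ * Xt)ᴴ) := by rw [this]
        _ = _ := by rw [Matrix.trace_conjTranspose]; simp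
    rw [h1, hY]
    simp only [Matrix.trace_add, Matrix.trace_sub, Matrix.trace_one, h2]
    simp [Fintype.card_fin]
    ring
  rw [expand X hX, expand (U * Vᴴ) (by
    rw [conjTranspose_mul, conjTranspose_conjTranspose, Matrix.mul_assoc,
      ← Matrix.mul_assoc Uᴴ U Vᴴ, hU, Matrix.one_mul, hV'])]
  -- It suffices to show trace(Xᴴ Xt) ≤ trace((UVᴴ)ᴴ Xt)
  have goal : Matrix.trace (Xᴴ * Xt) ≤ Matrix.trace ((U * Vᴴ)ᴴ * Xt) := by
    -- RHS equals ∑ σ i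
    have hRHS : Matrix.trace ((U * Vᴴ)ᴴ * Xt) = ∑ i, σ i := by
      rw [hSVD, conjTranspose_mul, conjTranspose_conjTranspose]
      have : V * Uᴴ * (U * Matrix.diagonal σ * Vᴴ)
          = V * (Matrix.diagonal σ * Vᴴ) := by
        rw [Matrix.mul_assoc U (Matrix.diagonal σ) Vᴴ, Matrix.mul_assoc V Uᴴ _,
          ← Matrix.mul_assoc Uᴴ U _, hU, Matrix.one_mul]
      rw [this, ← Matrix.mul_assoc, Matrix.trace_mul_comm, ← Matrix.mul_assoc, hV,
        Matrix.one_mul, Matrix.trace_diagonal]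
    rw [hRHS, hSVD]
    -- LHS: trace(Xᴴ U Σ Vᴴ) = ∑ i, (Vᴴ Xᴴ U) i i * σ i
    have hLHS : Matrix.trace (Xᴴ * (U * Matrix.diagonal σ * Vᴴ))
        = ∑ i, (Vᴴ * Xᴴ * U) i i * σ i := by
      have : Xᴴ * (U * Matrix.diagonal σ * Vᴴ)
          = (Xᴴ * U * Matrix.diagonal σ) * Vᴴ := by
        simp [Matrix.mul_assoc]
      rw [this, Matrix.trace_mul_comm]
      have : Vᴴ * (Xᴴ * U * Matrix.diagonal σ)
          = (Vᴴ * Xᴴ * U) * Matrix.diagonal σ := by simp [Matrix.mul_assoc]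
      rw [this]
      simp [Matrix.trace, Matrix.diag, Matrix.mul_diagonal]
    rw [hLHS]
    apply Finset.sum_le_sum
    intro i _
    have hdiag : (Vᴴ * Xᴴ * U) i i ≤ 1 := by
      -- (Vᴴ Xᴴ U) i i = ∑ l, (X*V) l i * U l i, Cauchy-Schwarz
      have hsum : (Vᴴ * Xᴴ * U) i i = ∑ l, (X * V) l i * U l i := by
        have : Vᴴ * Xᴴ = (X * V)ᴴ := by rw [conjTranspose_mul]
        rw [this]
        simp only [Matrix.mul_apply, Matrix.conjTranspose_apply, star_trivial]
      have ha : (∑ l, ((X * V) l i) ^ 2) = 1 := by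
        have : (∑ l, ((X * V) l i) ^ 2) = ((X * V)ᴴ * (X * V)) i i := by
          simp only [Matrix.mul_apply, Matrix.conjTranspose_apply, star_trivial, sq]
        rw [this, conjTranspose_mul]
        have : Vᴴ * Xᴴ * (X * V) = Vᴴ * V := by
          rw [Matrix.mul_assoc Vᴴ Xᴴ _, ← Matrix.mul_assoc Xᴴ X V, hX,
            Matrix.one_mul]
        rw [this, hV]
        simp
      have hb : (∑ l, (U l i) ^ 2) = 1 := by
        have : (∑ l, (U l i) ^ 2) = (Uᴴ * U) i i := by
          simp [Matrix.mul_apply, Matrix.conjTranspose_apply, sq]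
        rw [this, hU]; simp
      have hcs := Finset.sum_mul_sq_le_sq_mul_sq Finset.univ
        (fun l => (X * V) l i) (fun l => U l i)
      rw [ha, hb, one_mul] at hcs
      rw [hsum]
      nlinarith [hcs, sq_nonneg ((∑ l, (X * V) l i * U l i) - 1)]
    nlinarith [hσ i, hdiag]
  linarith [goal]
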